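/- Let X be a real Banach space, 0 < p < ∞, and ∑_i x_i a series in X. The following are equivalent: (1) ∑_i x_i is weakly unconditionally Cauchy; (2) S_{w-w_p}(∑ x_i) is complete; (3) c_0 ⊆ S_{w-w_p}(∑ x_i). -/

import Mathlib

/-!
(1) ⇒ (2): by Banach–Steinhaus a weakly unconditionally Cauchy series satisfies
`∑ i ∈ F, |f (x i)| ≤ H * ‖f‖`, so the `w-w_p` limit of `∑ a i • x i` depends `H`-Lipschitz on
`a ∈ ℓ∞`. Along a Cauchy sequence in `S_{w-w_p}` the limits therefore converge in `X`, and their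
limit is the limit for the limit coefficient sequence; so `S_{w-w_p}` is closed in `ℓ∞`.
(2) ⇒ (3): finitely supported sequences lie in `S_{w-w_p}`, and they are dense in `c₀`.
(3) ⇒ (1): if `∑ |f (x i)| = ∞`, suitable weights tending to zero make the scalar partial sums
of `f` tend to infinity, and such a sequence is never strongly Cesàro summable.
-/

open Filter Finset BoundedContinuousFunction

/-- Weak strong `p`-Cesàro (w-w_p) summability: strong `p`-Cesàro summability of
`(f (x k))` to `f L` for every continuous linear functional `f`. -/
def WeakStrongCesaro {X : Type*} [NormedAddCommGroup X] [NormedSpace ℝ X]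
    (p : ℝ) (x : ℕ → X) (L : X) : Prop :=
  ∀ f : X →L[ℝ] ℝ,
    Tendsto (fun n : ℕ => (n : ℝ)⁻¹ * ∑ k ∈ range n, |f (x k) - f L| ^ p) atTop (nhds 0)

/-- The `w-w_p`-summability space of a series, inside `ℓ∞ = (ℕ →ᵇ ℝ)`. -/
def SwwpSpace {X : Type*} [NormedAddCommGroup X] [NormedSpace ℝ X]
    (p : ℝ) (x : ℕ → X) : Set (ℕ →ᵇ ℝ) :=
  {a : ℕ →ᵇ ℝ | ∃ L : X, WeakStrongCesaro p (fun n => ∑ i ∈ range n, a i • x i) L}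

open Topology

noncomputable def cesaroMean (u : ℕ → ℝ) (n : ℕ) : ℝ :=
  (n : ℝ)⁻¹ * ∑ k ∈ range n, u k

lemma cesaroMean_nonneg {u : ℕ → ℝ} (hu : ∀ k, 0 ≤ u k) (n : ℕ) : 0 ≤ cesaroMean u n :=
  mul_nonneg (by positivity) (sum_nonneg fun k _ => hu k)

lemma cesaroMean_mono {u v : ℕ → ℝ} (huv : ∀ k, u k ≤ v k) (n : ℕ) :
    cesaroMean u n ≤ cesaroMean v n :=
  mul_le_mul_of_nonneg_left (sum_le_sum fun k _ => huv k) (by positivity)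

lemma cesaroMean_add (u v : ℕ → ℝ) (n : ℕ) :
    cesaroMean (fun k => u k + v k) n = cesaroMean u n + cesaroMean v n := by
  simp only [cesaroMean, sum_add_distrib, mul_add]

lemma cesaroMean_const_add_mul {n : ℕ} (hn : n ≠ 0) (A B : ℝ) (v : ℕ → ℝ) :
    cesaroMean (fun k => A + B * v k) n = A + B * cesaroMean v n := by
  simp only [cesaroMean, sum_add_distrib, sum_const, card_range, nsmul_eq_mul, ← mul_sum]
  field_simp

lemma le_of_eventually_le_of_tendsto_cesaroMean {u : ℕ → ℝ} {c l : ℝ}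
    (hc : ∀ᶠ k in atTop, c ≤ u k) (hu : Tendsto (cesaroMean u) atTop (𝓝 l)) : c ≤ l := by
  have hmin : Tendsto (cesaroMean fun k => min (u k) c) atTop (𝓝 c) := by
    refine Tendsto.cesaro (tendsto_const_nhds.congr' ?_)
    filter_upwards [hc] with k hk using (min_eq_right hk).symm
  exact le_of_tendsto_of_tendsto' hmin hu (cesaroMean_mono fun k => min_le_left _ _)

lemma Real.add_rpow_le_two_rpow_mul_rpow_add_rpow {p a b : ℝ} (hp : 0 ≤ p) (ha : 0 ≤ a)
    (hb : 0 ≤ b) : (a + b) ^ p ≤ 2 ^ p * (a ^ p + b ^ p) := calc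
  (a + b) ^ p ≤ (2 * max a b) ^ p := by
    gcongr
    linarith [le_max_left a b, le_max_right a b]
  _ = 2 ^ p * max a b ^ p := Real.mul_rpow zero_le_two (ha.trans (le_max_left a b))
  _ ≤ 2 ^ p * (a ^ p + b ^ p) := by
    have := Real.rpow_nonneg ha p
    have := Real.rpow_nonneg hb p
    gcongr
    rcases max_choice a b with h | h <;> rw [h] <;> linarith

-- `WeakStrongCesaro p x L` unfolds to `∀ f, StrongCesaro p (fun n => f (x n)) (f L)`.
def StrongCesaro (p : ℝ) (t : ℕ → ℝ) (c : ℝ) : Prop :=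
  Tendsto (cesaroMean fun k => |t k - c| ^ p) atTop (𝓝 0)

namespace StrongCesaro

variable {p : ℝ} {t s : ℕ → ℝ} {c d : ℝ}

lemma of_eventually_eq (hp : p ≠ 0) (h : ∀ᶠ k in atTop, t k = c) : StrongCesaro p t c := by
  refine Tendsto.cesaro (tendsto_const_nhds.congr' ?_)
  filter_upwards [h] with k hk
  rw [hk, sub_self, abs_zero, Real.zero_rpow hp]

lemma not_of_tendsto_atTop (hp : 0 ≤ p) (ht : Tendsto t atTop atTop) : ¬ StrongCesaro p t c := by
  intro h
  have hge : ∀ᶠ k in atTop, 1 ≤ |t k - c| ^ p := by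
    filter_upwards [ht.eventually_ge_atTop (c + 1)] with k hk
    exact Real.one_le_rpow (by rw [abs_of_nonneg (by linarith)]; linarith) hp
  linarith [le_of_eventually_le_of_tendsto_cesaroMean hge h]

lemma abs_sub_le (hp : 0 < p) {ε : ℝ} (hts : ∀ n, |t n - s n| ≤ ε) (ht : StrongCesaro p t c)
    (hs : StrongCesaro p s d) : |c - d| ≤ ε := by
  by_contra! hlt
  set w := |c - d| - ε
  have hw : 0 < w := sub_pos.2 hlt
  have hge : ∀ k, w ^ p / 2 ^ p ≤ |t k - c| ^ p + |s k - d| ^ p := by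
    intro k
    have hwk : w ≤ |t k - c| + |s k - d| := by
      linarith [hts k, _root_.abs_sub_le c (t k) (s k), _root_.abs_sub_le c (s k) d,
        abs_sub_comm c (t k)]
    rw [div_le_iff₀' (by positivity)]
    exact (Real.rpow_le_rpow hw.le hwk hp.le).trans
      (Real.add_rpow_le_two_rpow_mul_rpow_add_rpow hp.le (abs_nonneg _) (abs_nonneg _))
  have hsum : Tendsto (cesaroMean fun k => |t k - c| ^ p + |s k - d| ^ p) atTop (𝓝 0) := by
    simpa only [add_zero] using (ht.add hs).congr fun n => (cesaroMean_add _ _ n).symm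
  exact (le_of_eventually_le_of_tendsto_cesaroMean (Eventually.of_forall hge) hsum).not_gt
    (by positivity)

lemma of_approx (hp : 0 < p)
    (h : ∀ δ > 0, ∃ s d, (∀ n, |t n - s n| ≤ δ) ∧ |c - d| ≤ δ ∧ StrongCesaro p s d) :
    StrongCesaro p t c := by
  refine tendsto_order.2 ⟨fun a ha => Eventually.of_forall fun n =>
    ha.trans_le (cesaroMean_nonneg (fun k => by positivity) n), fun η hη => ?_⟩
  have hsmall : ∀ᶠ δ in 𝓝[>] (0 : ℝ), 2 ^ p * (2 * δ) ^ p < η / 2 := by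
    have hcont : Tendsto (fun δ : ℝ => 2 ^ p * (2 * δ) ^ p) (𝓝 0) (𝓝 (2 ^ p * (2 * 0) ^ p)) :=
      ((continuous_const.mul continuous_id).rpow_const fun _ => Or.inr hp.le).tendsto 0
        |>.const_mul _
    rw [mul_zero, Real.zero_rpow hp.ne', mul_zero] at hcont
    exact nhdsWithin_le_nhds (hcont.eventually (gt_mem_nhds (by positivity)))
  obtain ⟨δ, hδη, hδ⟩ := (hsmall.and self_mem_nhdsWithin).exists
  obtain ⟨s, d, hts, hcd, hs⟩ := h δ hδ
  have hpt : ∀ k, |t k - c| ^ p ≤ 2 ^ p * (2 * δ) ^ p + 2 ^ p * |s k - d| ^ p := by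
    intro k
    have htk : |t k - c| ≤ 2 * δ + |s k - d| := by
      linarith [hts k, _root_.abs_sub_le (t k) (s k) d, _root_.abs_sub_le (t k) d c,
        abs_sub_comm d c]
    rw [← mul_add]
    exact (Real.rpow_le_rpow (abs_nonneg _) htk hp.le).trans
      (Real.add_rpow_le_two_rpow_mul_rpow_add_rpow hp.le (by positivity) (abs_nonneg _))
  filter_upwards [hs.eventually (gt_mem_nhds (show 0 < η / 2 / 2 ^ p by positivity)),
    eventually_ne_atTop 0] with n hn hn0
  calc cesaroMean (fun k => |t k - c| ^ p) n
      ≤ 2 ^ p * (2 * δ) ^ p + 2 ^ p * cesaroMean (fun k => |s k - d| ^ p) n :=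
        (cesaroMean_mono hpt n).trans_eq (cesaroMean_const_add_mul hn0 _ _ _)
    _ < η / 2 + 2 ^ p * (η / 2 / 2 ^ p) := by gcongr
    _ = η := by field_simp; ring

end StrongCesaro

-- With `T n = ∑ i < n, |c i|` unbounded, the weights `sign (c i) / √(T (i + 1))` tend to zero
-- while the weighted partial sums are at least `√(T n)`.
lemma exists_tendsto_zero_tendsto_sum_mul_atTop {c : ℕ → ℝ} (hc : ¬ Summable fun i => |c i|) :
    ∃ a : ℕ → ℝ, Tendsto a atTop (𝓝 0) ∧
      Tendsto (fun n => ∑ i ∈ range n, a i * c i) atTop atTop := by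
  set T : ℕ → ℝ := fun n => ∑ i ∈ range n, |c i|
  have hT : Tendsto T atTop atTop :=
    (not_summable_iff_tendsto_nat_atTop_of_nonneg fun i => abs_nonneg _).1 hc
  refine ⟨fun i => SignType.sign (c i) / √(T (i + 1)), ?_, ?_⟩
  · have h0 : Tendsto (fun i => (√(T (i + 1)))⁻¹) atTop (𝓝 0) :=
      tendsto_inv_atTop_zero.comp (Real.tendsto_sqrt_atTop.comp (hT.comp (tendsto_add_atTop_nat 1)))
    refine squeeze_zero_norm (fun i => ?_) h0
    rw [norm_div, div_eq_mul_inv, Real.norm_of_nonneg (Real.sqrt_nonneg _)]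
    refine mul_le_of_le_one_left (by positivity) ?_
    rcases SignType.sign (c i) with _ | _ | _ <;> simp
  · refine tendsto_atTop_mono (fun n => ?_) (Real.tendsto_sqrt_atTop.comp hT)
    calc √(T n) = ∑ i ∈ range n, |c i| / √(T n) := by rw [← sum_div, Real.div_sqrt]
      _ ≤ ∑ i ∈ range n, SignType.sign (c i) / √(T (i + 1)) * c i := by
        refine sum_le_sum fun i hi => ?_
        rw [div_mul_eq_mul_div, sign_mul_self]
        rcases (abs_nonneg (c i)).eq_or_lt with h | h
        · simp [← h]
        have hTi : |c i| ≤ T (i + 1) := by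
          simpa [T, sum_range_succ] using sum_nonneg fun j (_ : j ∈ range i) => abs_nonneg (c j)
        have hTn : T (i + 1) ≤ T n :=
          sum_le_sum_of_subset_of_nonneg (range_subset_range.2 (mem_range.1 hi))
            fun j _ _ => abs_nonneg _
        exact div_le_div_of_nonneg_left h.le (Real.sqrt_pos.2 (h.trans_le hTi))
          (Real.sqrt_le_sqrt hTn)

section

variable {X : Type*} [NormedAddCommGroup X] [NormedSpace ℝ X]

def WeaklyUnconditionallyCauchy (x : ℕ → X) : Prop :=
  ∀ f : X →L[ℝ] ℝ, Summable fun i => |f (x i)|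

-- Banach–Steinhaus applied to the bidual images of the signed finite sums `∑ i ∈ F, ±x i`.
lemma WeaklyUnconditionallyCauchy.exists_sum_abs_le {x : ℕ → X}
    (hx : WeaklyUnconditionallyCauchy x) :
    ∃ H, 0 ≤ H ∧ ∀ (f : X →L[ℝ] ℝ) (F : Finset ℕ), ∑ i ∈ F, |f (x i)| ≤ H * ‖f‖ := by
  let g : Finset ℕ × (ℕ → SignType) → StrongDual ℝ (StrongDual ℝ X) := fun q =>
    NormedSpace.inclusionInDoubleDual ℝ X (∑ i ∈ q.1, (q.2 i : ℝ) • x i)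
  have hg : ∀ q f, g q f = ∑ i ∈ q.1, (q.2 i : ℝ) * f (x i) := by
    intro q f
    simp [g, map_sum]
  obtain ⟨H, hH⟩ := banach_steinhaus (g := g) fun f => ⟨∑' i, |f (x i)|, fun q => by
    rw [hg, Real.norm_eq_abs]
    refine (abs_sum_le_sum_abs _ _).trans <| (sum_le_sum fun i _ => ?_).trans <|
      (hx f).sum_le_tsum _ fun i _ => abs_nonneg _
    rw [abs_mul]
    refine mul_le_of_le_one_left (abs_nonneg _) ?_
    rcases q.2 i with _ | _ | _ <;> simp⟩
  refine ⟨max H 0, le_max_right _ _, fun f F => ?_⟩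
  calc ∑ i ∈ F, |f (x i)| = g (F, fun i => SignType.sign (f (x i))) f := by
        simp only [hg, sign_mul_self]
    _ ≤ ‖g (F, fun i => SignType.sign (f (x i)))‖ * ‖f‖ :=
        (le_abs_self _).trans ((g _).le_opNorm f)
    _ ≤ max H 0 * ‖f‖ := by gcongr; exact (hH _).trans (le_max_left _ _)

lemma abs_apply_sum_sub_le_of_sum_abs_le {x : ℕ → X} {H : ℝ}
    (hH : ∀ (f : X →L[ℝ] ℝ) (F : Finset ℕ), ∑ i ∈ F, |f (x i)| ≤ H * ‖f‖)
    (u v : ℕ →ᵇ ℝ) (f : X →L[ℝ] ℝ) (n : ℕ) :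
    |f (∑ i ∈ range n, u i • x i) - f (∑ i ∈ range n, v i • x i)| ≤ dist u v * (H * ‖f‖) := by
  have hsub : f (∑ i ∈ range n, u i • x i) - f (∑ i ∈ range n, v i • x i)
      = ∑ i ∈ range n, (u i - v i) * f (x i) := by
    simp only [map_sum, map_smul, smul_eq_mul, ← sum_sub_distrib, sub_mul]
  rw [hsub]
  calc |∑ i ∈ range n, (u i - v i) * f (x i)| ≤ ∑ i ∈ range n, dist u v * |f (x i)| := by
        refine (abs_sum_le_sum_abs _ _).trans (sum_le_sum fun i _ => ?_)
        rw [abs_mul, ← Real.dist_eq]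
        exact mul_le_mul_of_nonneg_right (dist_coe_le_dist i) (abs_nonneg _)
    _ ≤ dist u v * (H * ‖f‖) := by
        rw [← mul_sum]
        exact mul_le_mul_of_nonneg_left (hH f _) dist_nonneg

lemma WeaklyUnconditionallyCauchy.isComplete_swwpSpace [CompleteSpace X] {p : ℝ} (hp : 0 < p)
    {x : ℕ → X} (hx : WeaklyUnconditionallyCauchy x) : IsComplete (SwwpSpace p x) := by
  obtain ⟨H, hH0, hH⟩ := hx.exists_sum_abs_le
  have hdiff := abs_apply_sum_sub_le_of_sum_abs_le hH
  refine (IsSeqClosed.isClosed fun b a hb hba => ?_).isComplete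
  choose L hL using hb
  have hLL : ∀ m m', dist (L m) (L m') ≤ H * dist (b m) (b m') := fun m m' => by
    rw [dist_eq_norm]
    refine NormedSpace.norm_le_dual_bound ℝ _ (by positivity) fun f => ?_
    rw [map_sub, Real.norm_eq_abs, mul_assoc, mul_left_comm]
    exact StrongCesaro.abs_sub_le hp (hdiff _ _ f) (hL m f) (hL m' f)
  have hLC : CauchySeq L := by
    refine cauchySeq_iff_tendsto_dist_atTop_0.2 (squeeze_zero (fun _ => dist_nonneg)
      (fun q => hLL q.1 q.2) ?_)
    simpa using (cauchySeq_iff_tendsto_dist_atTop_0.1 hba.cauchySeq).const_mul H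
  obtain ⟨Lim, hLim⟩ := cauchySeq_tendsto_of_complete hLC
  refine ⟨Lim, fun f => StrongCesaro.of_approx hp fun δ hδ => ?_⟩
  have hb : Tendsto (fun m => dist a (b m) * (H * ‖f‖)) atTop (𝓝 0) := by
    simpa using ((tendsto_const_nhds (x := a)).dist hba).mul_const (H * ‖f‖)
  have hf : Tendsto (fun m => dist (f Lim) (f (L m))) atTop (𝓝 0) := by
    simpa using (tendsto_const_nhds (x := f Lim)).dist ((f.continuous.tendsto Lim).comp hLim)
  obtain ⟨m, hbm, hfm⟩ :=
    ((hb.eventually (gt_mem_nhds hδ)).and (hf.eventually (gt_mem_nhds hδ))).exists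
  exact ⟨_, _, fun n => (hdiff a (b m) f n).trans hbm.le, (Real.dist_eq _ _ ▸ hfm).le, hL m f⟩

lemma mem_swwpSpace_of_eventually_zero {p : ℝ} (hp : p ≠ 0) (x : ℕ → X) {b : ℕ →ᵇ ℝ} {N : ℕ}
    (hb : ∀ i ≥ N, b i = 0) : b ∈ SwwpSpace p x := by
  refine ⟨∑ i ∈ range N, b i • x i, fun f => StrongCesaro.of_eventually_eq hp ?_⟩
  filter_upwards [eventually_ge_atTop N] with n hn
  congr 1
  exact (sum_subset (range_subset_range.2 hn) fun i _ hiN => by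
    rw [hb i (by simpa using hiN), zero_smul]).symm

noncomputable def BoundedContinuousFunction.truncate (a : ℕ →ᵇ ℝ) (N : ℕ) : ℕ →ᵇ ℝ :=
  ofNormedAddCommGroupDiscrete (fun i => if i < N then a i else 0) ‖a‖ fun i => by
    split_ifs
    exacts [norm_coe_le_norm a i, by simp]

@[simp]
lemma BoundedContinuousFunction.truncate_apply (a : ℕ →ᵇ ℝ) (N i : ℕ) :
    a.truncate N i = if i < N then a i else 0 :=
  rfl

lemma BoundedContinuousFunction.tendsto_truncate {a : ℕ →ᵇ ℝ} (ha : Tendsto a atTop (𝓝 0)) :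
    Tendsto a.truncate atTop (𝓝 a) := by
  rw [Metric.nhds_basis_closedBall.tendsto_right_iff] at ha ⊢
  intro ε hε
  obtain ⟨N₀, hN₀⟩ := eventually_atTop.1 (ha ε hε)
  filter_upwards [eventually_ge_atTop N₀] with N hN
  refine (dist_le hε.le).2 fun i => ?_
  by_cases hi : i < N
  · simp [hi, hε.le]
  · simpa [hi, dist_comm] using hN₀ i (by omega)

lemma exists_weakStrongCesaro_of_isClosed {p : ℝ} (hp : p ≠ 0) {x : ℕ → X}
    (hS : IsClosed (SwwpSpace p x)) {a : ℕ → ℝ} (ha : Tendsto a atTop (𝓝 0)) :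
    ∃ L, WeakStrongCesaro p (fun n => ∑ i ∈ range n, a i • x i) L := by
  obtain ⟨C, hC⟩ := ha.norm.bddAbove_range
  let aB : ℕ →ᵇ ℝ := ofNormedAddCommGroupDiscrete a C fun i => hC ⟨i, rfl⟩
  have haB : aB ∈ SwwpSpace p x := hS.mem_of_tendsto (tendsto_truncate (a := aB) ha)
    (Eventually.of_forall fun N => mem_swwpSpace_of_eventually_zero hp x (N := N) fun i hi => by
      simp only [truncate_apply, ite_eq_right_iff]
      omega)
  exact haB

lemma WeaklyUnconditionallyCauchy.of_forall_tendsto_zero {p : ℝ} (hp : 0 ≤ p) {x : ℕ → X}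
    (h : ∀ a : ℕ → ℝ, Tendsto a atTop (𝓝 0) →
      ∃ L, WeakStrongCesaro p (fun n => ∑ i ∈ range n, a i • x i) L) :
    WeaklyUnconditionallyCauchy x := by
  intro f
  by_contra hf
  obtain ⟨a, ha, hsum⟩ := exists_tendsto_zero_tendsto_sum_mul_atTop hf
  obtain ⟨L, hL⟩ := h a ha
  refine StrongCesaro.not_of_tendsto_atTop hp hsum (c := f L) ?_
  have hLf := hL f
  simp only [map_sum, map_smul, smul_eq_mul] at hLf
  exact hLf

end

theorem statement15 {X : Type*} [NormedAddCommGroup X] [NormedSpace ℝ X] [CompleteSpace X]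
    (p : ℝ) (hp : 0 < p) (x : ℕ → X) :
    List.TFAE
      [∀ f : X →L[ℝ] ℝ, Summable fun i => |f (x i)|,
       IsComplete (SwwpSpace p x),
       ∀ a : ℕ → ℝ, Tendsto a atTop (nhds 0) →
         ∃ L : X, WeakStrongCesaro p (fun n => ∑ i ∈ range n, a i • x i) L] := by
  tfae_have 1 → 2 := WeaklyUnconditionallyCauchy.isComplete_swwpSpace hp
  tfae_have 2 → 3 := fun hS _ => exists_weakStrongCesaro_of_isClosed hp.ne' hS.isClosed
  tfae_have 3 → 1 := WeaklyUnconditionallyCauchy.of_forall_tendsto_zero hp.le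
  tfae_finish
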